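/- arXiv:math/0703594 — 7 statements merged into one kernel-verified Lean document; each statement's English description precedes it below -/
import Mathlib

section
/- The map R: G × G → G × G defined on any group G by R(x,y) = (y⁻¹, yxy) satisfies the set-theoretic Yang–Baxter equation (R × id)(id × R)(R × id) = (id × R)(R × id)(id × R). -/
/-- Wada's type W₁ map `R(x,y) = (y⁻¹, yxy)` on any group satisfies the
set-theoretic Yang–Baxter equation. -/
theorem stmt_0 {G : Type*} [Group G]
    (R : G × G → G × G) (hR : ∀ x y : G, R (x, y) = (y⁻¹, y * x * y))
    (R₁₂ R₂₃ : G × G × G → G × G × G)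
    (h₁₂ : ∀ x y z : G, R₁₂ (x, y, z) = ((R (x, y)).1, (R (x, y)).2, z))
    (h₂₃ : ∀ x y z : G, R₂₃ (x, y, z) = (x, R (y, z))) :
    R₁₂ ∘ R₂₃ ∘ R₁₂ = R₂₃ ∘ R₁₂ ∘ R₂₃ := by
  funext p
  obtain ⟨x, y, z⟩ := p
  simp only [Function.comp_apply, h₁₂, h₂₃, hR]
  refine Prod.ext ?_ (Prod.ext ?_ ?_) <;> simp <;> group
end

section
/- The map R: G × G → G × G defined on any group G by R(x,y) = (x⁻¹y⁻¹x, y²x) satisfies the set-theoretic Yang–Baxter equation (R × id)(id × R)(R × id) = (id × R)(R × id)(id × R). -/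
/-- Wada's type W₂ map `R(x,y) = (x⁻¹y⁻¹x, y²x)` on any group satisfies the
set-theoretic Yang–Baxter equation. -/
theorem stmt_1 {G : Type*} [Group G]
    (R : G × G → G × G) (hR : ∀ x y : G, R (x, y) = (x⁻¹ * y⁻¹ * x, y * y * x))
    (R₁₂ R₂₃ : G × G × G → G × G × G)
    (h₁₂ : ∀ x y z : G, R₁₂ (x, y, z) = ((R (x, y)).1, (R (x, y)).2, z))
    (h₂₃ : ∀ x y z : G, R₂₃ (x, y, z) = (x, R (y, z))) :
    R₁₂ ∘ R₂₃ ∘ R₁₂ = R₂₃ ∘ R₁₂ ∘ R₂₃ := by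
  funext p
  obtain ⟨x, y, z⟩ := p
  simp only [Function.comp_apply, h₁₂, h₂₃, hR]
  ext <;> simp <;> group
end

section
/- The map R: G × G → G × G defined on any group G by R(x,y) = (y, yx⁻¹y) satisfies the set-theoretic Yang–Baxter equation (R × id)(id × R)(R × id) = (id × R)(R × id)(id × R). -/
/-- Wada's core group map `R(x,y) = (y, yx⁻¹y)` on any group satisfies the
set-theoretic Yang–Baxter equation. -/
theorem stmt_2 {G : Type*} [Group G]
    (R : G × G → G × G) (hR : ∀ x y : G, R (x, y) = (y, y * x⁻¹ * y))
    (R₁₂ R₂₃ : G × G × G → G × G × G)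
    (h₁₂ : ∀ x y z : G, R₁₂ (x, y, z) = ((R (x, y)).1, (R (x, y)).2, z))
    (h₂₃ : ∀ x y z : G, R₂₃ (x, y, z) = (x, R (y, z))) :
    R₁₂ ∘ R₂₃ ∘ R₁₂ = R₂₃ ∘ R₁₂ ∘ R₂₃ := by
  funext p
  obtain ⟨x, y, z⟩ := p
  show R₁₂ (R₂₃ (R₁₂ (x, y, z))) = R₂₃ (R₁₂ (R₂₃ (x, y, z)))
  rw [h₁₂, hR, h₂₃, hR, h₁₂, hR, h₂₃, hR, h₁₂, hR, h₂₃, hR]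
  refine Prod.ext ?_ (Prod.ext ?_ ?_) <;> simp <;> group
end

section
/- For any group G, the birack R(x,y) = (x⁻¹y⁻¹x, y²x) is a biquandle: for every a ∈ G there exists a unique x_a ∈ G with R(x_a, a) = (x_a, a), and a unique y_a ∈ G with R(a, y_a) = (a, y_a). -/
/-- The birack `R(x,y) = (x⁻¹y⁻¹x, y²x)` on any group is a biquandle: for every `a` there is a
unique `x_a` with `R(x_a, a) = (x_a, a)` and a unique `y_a` with `R(a, y_a) = (a, y_a)`. -/
theorem stmt_5 {G : Type*} [Group G]
    (R : G × G → G × G) (hR : ∀ x y : G, R (x, y) = (x⁻¹ * y⁻¹ * x, y * y * x)) :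
    ∀ a : G, (∃! xa : G, R (xa, a) = (xa, a)) ∧ (∃! ya : G, R (a, ya) = (a, ya)) := by
  intro a
  constructor
  · refine ⟨a⁻¹, ?_, ?_⟩
    · show R (a⁻¹, a) = (a⁻¹, a)
      rw [hR, Prod.ext_iff]
      constructor <;> · simp
    · intro x hx
      rw [hR, Prod.ext_iff] at hx
      have h2 : a * a * x = a := hx.2
      have : a * (a * x) = a * 1 := by rw [← mul_assoc]; simpa using h2
      have := mul_left_cancel this
      have := mul_left_cancel (a := a) (by simpa using this : a * x = a * a⁻¹)
      exact this
  · refine ⟨a⁻¹, ?_, ?_⟩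
    · show R (a, a⁻¹) = (a, a⁻¹)
      rw [hR, Prod.ext_iff]
      constructor <;> · simp
    · intro y hy
      rw [hR, Prod.ext_iff] at hy
      have h2 : y * y * a = y := hy.2
      have : y * (y * a) = y * 1 := by rw [← mul_assoc]; simpa using h2
      have h1 : y * a = 1 := mul_left_cancel this
      exact eq_inv_of_mul_eq_one_left h1
end

section
/- The group with presentation ⟨x, y | x⁻¹yx = y³xy, x(y⁻³x⁻¹y⁻³)² = (y⁻³x⁻¹y⁻³)x²⟩ is isomorphic to the group ⟨a, y | yay⁻¹ = a², a⁵⁵ = 1⟩. -/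
/-!
Substitute `a = xy³`, so that `x = az` with `z = y⁻³` and `w = zx⁻¹z = a⁻¹z`. The first relation
becomes `yay⁻¹ = a²`; then `y³` conjugates `a` to `a⁸`, i.e. `aⁿz = za⁸ⁿ`, and pushing every `z`
to the left turns the second relation `aza⁻¹za⁻¹z = a⁻¹zazaz` into `z²a⁵⁵z = z²a⁻⁵⁵z`, that is
`a¹¹⁰ = 1`. As `a² = yay⁻¹` is conjugate to `a`, this is equivalent to `a⁵⁵ = 1`. The
substitutions `x ↦ ay⁻³` and `a ↦ xy³` are mutually inverse.
-/

/-- Generators: `0 ↦ x`, `1 ↦ y`.  Relations: `x⁻¹yx = y³xy` and `xw² = wx²` where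
`w = y⁻³x⁻¹y⁻³`. -/
def kishinoRels : Set (FreeGroup (Fin 2)) :=
  { (FreeGroup.of 0)⁻¹ * FreeGroup.of 1 * FreeGroup.of 0 *
      ((FreeGroup.of 1) ^ 3 * FreeGroup.of 0 * FreeGroup.of 1)⁻¹,
    FreeGroup.of 0 * ((FreeGroup.of 1) ^ (-3 : ℤ) * (FreeGroup.of 0)⁻¹ *
        (FreeGroup.of 1) ^ (-3 : ℤ)) ^ 2 *
      (((FreeGroup.of 1) ^ (-3 : ℤ) * (FreeGroup.of 0)⁻¹ * (FreeGroup.of 1) ^ (-3 : ℤ)) *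
        (FreeGroup.of 0) ^ 2)⁻¹ }

/-- Generators: `0 ↦ a`, `1 ↦ y`.  Relations: `yay⁻¹ = a²` and `a⁵⁵ = 1`. -/
def kishinoRels' : Set (FreeGroup (Fin 2)) :=
  { FreeGroup.of 1 * FreeGroup.of 0 * (FreeGroup.of 1)⁻¹ * ((FreeGroup.of 0) ^ 2)⁻¹,
    (FreeGroup.of 0) ^ 55 }


namespace PresentedGroup

variable {α β : Type*} {rels : Set (FreeGroup α)} {rels' : Set (FreeGroup β)}

theorem lift_of_eq_one {r : FreeGroup α} (hr : r ∈ rels) :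
    FreeGroup.lift (of : α → PresentedGroup rels) r = 1 := by
  rw [show FreeGroup.lift of = mk rels from FreeGroup.ext_hom _ _ fun _ ↦ by simp [of]]
  exact one_of_mem hr

def mulEquivOfLiftInverse {f : α → PresentedGroup rels'} {g : β → PresentedGroup rels}
    (hf : ∀ r ∈ rels, FreeGroup.lift f r = 1) (hg : ∀ r ∈ rels', FreeGroup.lift g r = 1)
    (hgf : ∀ i, toGroup hg (f i) = of i) (hfg : ∀ j, toGroup hf (g j) = of j) :
    PresentedGroup rels ≃* PresentedGroup rels' :=
  (toGroup hf).toMulEquiv (toGroup hg) (ext fun i ↦ by simpa using hgf i)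
    (ext fun j ↦ by simpa using hfg j)

end PresentedGroup

section GroupIdentities

variable {G : Type*} [Group G]

theorem eq_iff_eq_of_mul_inv_eq_conj {u v u' v' c : G} (h : u * v⁻¹ = c * (u' * v'⁻¹) * c⁻¹) :
    u = v ↔ u' = v' := by
  rw [← mul_inv_eq_one, h, conj_eq_one_iff, mul_inv_eq_one]

theorem SemiconjBy.pow_left_of_sq {y a : G} (h : SemiconjBy y a (a ^ 2)) (k : ℕ) :
    SemiconjBy (y ^ k) a (a ^ 2 ^ k) := by
  induction k with
  | zero => simp
  | succ k ih =>
    rw [pow_succ y, pow_succ 2, pow_mul]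
    exact (ih.pow_right 2).mul_left h

theorem pow_two_mul_eq_one_iff_of_conj_eq_sq {a y : G} (h : y * a * y⁻¹ = a ^ 2) (n : ℕ) :
    a ^ (2 * n) = 1 ↔ a ^ n = 1 := by
  rw [← conj_eq_one_iff (a := y) (b := a ^ n), ← conj_pow, h, ← pow_mul]

theorem zpow_mul_zpow_mul_zpow_mul {a z : G} {q : ℤ} (h : SemiconjBy z (a ^ q) a) (l m n : ℤ) :
    a ^ l * z * (a ^ m * z) * (a ^ n * z) = z * z * a ^ (q * (q * l + m) + n) * z := by
  have push (k : ℤ) : a ^ k * z = z * a ^ (q * k) := by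
    rw [zpow_mul]; exact (h.zpow_right k).eq.symm
  rw [push l, mul_assoc z, ← mul_assoc _ (a ^ m), ← zpow_add, push]
  group

end GroupIdentities

section Kishino

variable {G : Type*} [Group G]

def SatisfiesKishinoRels (x y : G) : Prop :=
  x⁻¹ * y * x = y ^ 3 * x * y ∧
    x * (y ^ (-3 : ℤ) * x⁻¹ * y ^ (-3 : ℤ)) ^ 2 = y ^ (-3 : ℤ) * x⁻¹ * y ^ (-3 : ℤ) * x ^ 2

def SatisfiesKishinoRels' (a y : G) : Prop :=
  y * a * y⁻¹ = a ^ 2 ∧ a ^ 55 = 1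

theorem lift_kishinoRels_iff (f : Fin 2 → G) :
    (∀ r ∈ kishinoRels, FreeGroup.lift f r = 1) ↔ SatisfiesKishinoRels (f 0) (f 1) := by
  simp only [kishinoRels, Set.mem_insert_iff, Set.mem_singleton_iff, forall_eq_or_imp, forall_eq,
    map_mul, map_inv, map_pow, map_zpow, FreeGroup.lift_apply_of, mul_inv_eq_one]
  rfl

theorem lift_kishinoRels'_iff (f : Fin 2 → G) :
    (∀ r ∈ kishinoRels', FreeGroup.lift f r = 1) ↔ SatisfiesKishinoRels' (f 0) (f 1) := by
  simp only [kishinoRels', Set.mem_insert_iff, Set.mem_singleton_iff, forall_eq_or_imp, forall_eq,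
    map_mul, map_inv, map_pow, FreeGroup.lift_apply_of, mul_inv_eq_one]
  rfl

theorem semiconjBy_zpow_neg_three_of_conj_eq_sq {a y : G} (h : y * a * y⁻¹ = a ^ 2) :
    SemiconjBy (y ^ (-3 : ℤ)) (a ^ (8 : ℤ)) a := by
  have h₁ : SemiconjBy y a (a ^ 2) := mul_inv_eq_iff_eq_mul.mp h
  rw [zpow_neg, zpow_ofNat, zpow_ofNat]
  exact (h₁.pow_left_of_sq 3).inv_symm_left

theorem kishino_rel₁_iff (a y : G) :
    (a * y ^ (-3 : ℤ))⁻¹ * y * (a * y ^ (-3 : ℤ)) = y ^ 3 * (a * y ^ (-3 : ℤ)) * y ↔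
      y * a * y⁻¹ = a ^ 2 :=
  eq_iff_eq_of_mul_inv_eq_conj (c := y ^ 3 * a⁻¹) (by group)

theorem kishino_rel₂_iff {a z : G} (h : SemiconjBy z (a ^ (8 : ℤ)) a) :
    a * z * (z * (a * z)⁻¹ * z) ^ 2 = z * (a * z)⁻¹ * z * (a * z) ^ 2 ↔ a ^ 110 = 1 := by
  have lhs : a * z * (z * (a * z)⁻¹ * z) ^ 2 =
      a ^ (1 : ℤ) * z * (a ^ (-1 : ℤ) * z) * (a ^ (-1 : ℤ) * z) := by
    simp only [sq]; group
  have rhs : z * (a * z)⁻¹ * z * (a * z) ^ 2 =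
      a ^ (-1 : ℤ) * z * (a ^ (1 : ℤ) * z) * (a ^ (1 : ℤ) * z) := by
    simp only [sq]; group
  rw [lhs, rhs, zpow_mul_zpow_mul_zpow_mul h, zpow_mul_zpow_mul_zpow_mul h]
  exact eq_iff_eq_of_mul_inv_eq_conj (c := z * z) (by group)

theorem satisfiesKishinoRels_iff (a y : G) :
    SatisfiesKishinoRels (a * y ^ (-3 : ℤ)) y ↔ SatisfiesKishinoRels' a y := by
  rw [SatisfiesKishinoRels, SatisfiesKishinoRels', kishino_rel₁_iff]
  exact and_congr_right fun h ↦ (kishino_rel₂_iff (semiconjBy_zpow_neg_three_of_conj_eq_sq h)).trans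
    (pow_two_mul_eq_one_iff_of_conj_eq_sq h 55)

theorem satisfiesKishinoRels'_mul_pow_three_iff (x y : G) :
    SatisfiesKishinoRels' (x * y ^ 3) y ↔ SatisfiesKishinoRels x y := by
  rw [← satisfiesKishinoRels_iff, show x * y ^ 3 * y ^ (-3 : ℤ) = x by group]

end Kishino

/-- `⟨x, y | x⁻¹yx = y³xy, x(y⁻³x⁻¹y⁻³)² = (y⁻³x⁻¹y⁻³)x²⟩ ≅ ⟨a, y | yay⁻¹ = a², a⁵⁵ = 1⟩`. -/
theorem stmt_8 : Nonempty (PresentedGroup kishinoRels ≃* PresentedGroup kishinoRels') := by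
  have hf : ∀ r ∈ kishinoRels, FreeGroup.lift
      ![(.of 0 * .of 1 ^ (-3 : ℤ) : PresentedGroup kishinoRels'), .of 1] r = 1 :=
    (lift_kishinoRels_iff _).2 <| (satisfiesKishinoRels_iff _ _).2 <|
      (lift_kishinoRels'_iff _).1 fun _ ↦ PresentedGroup.lift_of_eq_one
  have hg : ∀ r ∈ kishinoRels', FreeGroup.lift
      ![(.of 0 * .of 1 ^ 3 : PresentedGroup kishinoRels), .of 1] r = 1 :=
    (lift_kishinoRels'_iff _).2 <| (satisfiesKishinoRels'_mul_pow_three_iff _ _).2 <|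
      (lift_kishinoRels_iff _).1 fun _ ↦ PresentedGroup.lift_of_eq_one
  refine ⟨PresentedGroup.mulEquivOfLiftInverse hf hg (fun i ↦ ?_) (fun i ↦ ?_)⟩ <;>
    fin_cases i <;> simp
end

section
/- For G = A = ℤ/n with n ≥ 2, the 2-cocycle f(x,y) = x + y of the abelian Wada biquandle R(x,y) = (-y, 2y+x) is not a coboundary: there is no function g: ℤ/n → ℤ/n such that f(x,y) = g(x) + g(y) - g(-y) - g(2y+x) for all x, y. -/
/-- For `ℤ/n` with `n ≥ 2`, the 2-cocycle `f(x,y) = x + y` of the abelian Wada biquandle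
`R(x,y) = (-y, 2y+x)` is not a coboundary. -/
theorem stmt_16 (n : ℕ) (hn : 2 ≤ n) :
    ¬ ∃ g : ZMod n → ZMod n, ∀ x y : ZMod n,
      x + y = g x + g y - g (-y) - g (2 * y + x) := by
  rintro ⟨g, hg⟩
  have h := hg 1 0
  simp at h
  have : (1 : ZMod n) ≠ 0 := by
    haveI : Fact (1 < n) := ⟨hn⟩
    exact one_ne_zero
  exact this h
end

section
/- Let p be an odd prime. The function h: ℤ/p × ℤ/p → ℤ/p defined by h(x,y) = (1/p)[(x̃^p + 2ỹ^p) - (x̃ + 2ỹ)^p] mod p (where x̃, ỹ are integer lifts; the numerator is divisible by p and the result is independent of the lifts) is a Yang–Baxter 2-cocycle for the abelian Wada biquandle R(x,y) = (-y, 2y+x): it satisfies h(x,y) + h(2y+x, z) + h(-y, -z) = h(y,z) + h(x, -z) + h(x-2z, 2z+y). -/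
/-- For an odd prime `p`, the function `h(x,y) = (1/p)[(x^p + 2y^p) - (x + 2y)^p] mod p`
(defined via integer lifts; the numerator is divisible by `p`) is a Yang–Baxter 2-cocycle
for the abelian Wada biquandle `R(x,y) = (-y, 2y+x)` on `ℤ/p`. -/
theorem stmt_17 (p : ℕ) (hp : p.Prime) (hodd : Odd p)
    (h : ZMod p → ZMod p → ZMod p)
    (hdef : ∀ a b : ℤ, h (a : ZMod p) (b : ZMod p) =
      (((a ^ p + 2 * b ^ p - (a + 2 * b) ^ p) / (p : ℤ) : ℤ) : ZMod p)) :
    (∀ a b : ℤ, (p : ℤ) ∣ (a ^ p + 2 * b ^ p - (a + 2 * b) ^ p)) ∧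
    ∀ x y z : ZMod p,
      h x y + h (2 * y + x) z + h (-y) (-z) =
        h y z + h x (-z) + h (x - 2 * z) (2 * z + y) := by
  haveI : Fact p.Prime := ⟨hp⟩
  have hdvd : ∀ a b : ℤ, (p : ℤ) ∣ (a ^ p + 2 * b ^ p - (a + 2 * b) ^ p) := by
    intro a b
    rw [← ZMod.intCast_zmod_eq_zero_iff_dvd]
    push_cast
    simp [ZMod.pow_card]
  refine ⟨hdvd, ?_⟩
  have key : ∀ a b : ℤ, ∃ k : ℤ,
      a ^ p + 2 * b ^ p - (a + 2 * b) ^ p = p * k ∧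
      h (a : ZMod p) (b : ZMod p) = (k : ZMod p) := by
    intro a b
    exact ⟨(a ^ p + 2 * b ^ p - (a + 2 * b) ^ p) / p,
      (Int.mul_ediv_cancel' (hdvd a b)).symm, hdef a b⟩
  intro x y z
  obtain ⟨a, rfl⟩ := ZMod.intCast_surjective x
  obtain ⟨b, rfl⟩ := ZMod.intCast_surjective y
  obtain ⟨c, rfl⟩ := ZMod.intCast_surjective z
  obtain ⟨k1, hk1, hv1⟩ := key a b
  obtain ⟨k2, hk2, hv2⟩ := key (2 * b + a) c
  obtain ⟨k3, hk3, hv3⟩ := key (-b) (-c)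
  obtain ⟨k4, hk4, hv4⟩ := key b c
  obtain ⟨k5, hk5, hv5⟩ := key a (-c)
  obtain ⟨k6, hk6, hv6⟩ := key (a - 2 * c) (2 * c + b)
  have e2 : (2 * (b : ZMod p) + a) = ((2 * b + a : ℤ) : ZMod p) := by push_cast; ring
  have e3a : (-(b : ZMod p)) = ((-b : ℤ) : ZMod p) := by push_cast; ring
  have e3b : (-(c : ZMod p)) = ((-c : ℤ) : ZMod p) := by push_cast; ring
  have e6a : ((a : ZMod p) - 2 * c) = ((a - 2 * c : ℤ) : ZMod p) := by push_cast; ring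
  have e6b : (2 * (c : ZMod p) + b) = ((2 * c + b : ℤ) : ZMod p) := by push_cast; ring
  rw [e2, e3a, e3b, e6a, e6b, hv1, hv2, hv3, hv4, hv5, hv6]
  have hne : ((p : ℤ)) ≠ 0 := by exact_mod_cast hp.ne_zero
  have hint : k1 + k2 + k3 = k4 + k5 + k6 := by
    have hneg : ∀ t : ℤ, (-t) ^ p = -(t ^ p) := fun t => Odd.neg_pow hodd t
    have hb3 : (-b + 2 * -c) = -(b + 2 * c) := by ring
    rw [hb3, hneg, hneg, hneg] at hk3
    have hb5 : (a + 2 * -c) = (a - 2 * c) := by ring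
    rw [hb5, hneg] at hk5
    have hb6 : (a - 2 * c + 2 * (2 * c + b)) = (2 * b + a + 2 * c) := by ring
    rw [hb6] at hk6
    have hb2 : (2 * b + a) = (a + 2 * b) := by ring
    rw [hb2] at hk2
    have hmul : (p : ℤ) * (k1 + k2 + k3) = p * (k4 + k5 + k6) := by
      linear_combination -hk1 - hk2 - hk3 + hk4 + hk5 + hk6
    exact mul_left_cancel₀ hne hmul
  exact_mod_cast congrArg (Int.cast : ℤ → ZMod p) hint
end
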